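/- arXiv:2605.27405 — 2 statements merged into one kernel-verified Lean document; each statement's English description precedes it below -/
import Mathlib

section
/- Let G be a simple graph on n ≥ 3 vertices with degree sequence d_1 ≥ ... ≥ d_n. Then the (n-1)-st largest signless Laplacian eigenvalue satisfies q_{n-1}(G) ≤ d_3. (In particular, at least two signless Laplacian eigenvalues lie in [0, d_3].) -/
open Finset
open scoped Classical

/-- The signless Laplacian matrix `Q(G) = D(G) + A(G)` of a simple graph. -/
noncomputable def sLap {V : Type*} [Fintype V] [DecidableEq V] (G : SimpleGraph V) :
    Matrix V V ℝ :=
  Matrix.diagonal (fun v => (G.degree v : ℝ)) + G.adjMatrix ℝ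

/-- Number of eigenvalues (with multiplicity) of a Hermitian matrix lying in a set. -/
noncomputable def eigCount {V : Type*} [Fintype V] [DecidableEq V]
    {M : Matrix V V ℝ} (hM : M.IsHermitian) (s : Set ℝ) : ℕ :=
  (Finset.univ.filter fun i => hM.eigenvalues i ∈ s).card

open Matrix

lemma dot_mulVec_symm {n : ℕ} {M : Matrix (Fin n) (Fin n) ℝ} (hM : M.IsHermitian)
    (g h : Fin n → ℝ) : g ⬝ᵥ (M *ᵥ h) = (M *ᵥ g) ⬝ᵥ h := by
  have hsym : ∀ i j, M j i = M i j := by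
    intro i j
    have := congrFun (congrFun hM.eq i) j
    simpa [Matrix.conjTranspose_apply] using this
  simp only [dotProduct, Matrix.mulVec, dotProduct, Finset.mul_sum, Finset.sum_mul]
  rw [Finset.sum_comm]
  exact Finset.sum_congr rfl fun s _ => Finset.sum_congr rfl fun t _ => by
    rw [hsym s t]; ring

lemma inner_eq_dot {n : ℕ} (f g : EuclideanSpace ℝ (Fin n)) :
    (inner ℝ f g : ℝ) = (f : Fin n → ℝ) ⬝ᵥ (g : Fin n → ℝ) := by
  simp [PiLp.inner_apply, dotProduct, RCLike.inner_apply, mul_comm]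

lemma spectral_sum {n : ℕ} {M : Matrix (Fin n) (Fin n) ℝ} (hM : M.IsHermitian)
    (f : Fin n → ℝ) :
    f ⬝ᵥ f = ∑ i, ((hM.eigenvectorBasis i : Fin n → ℝ) ⬝ᵥ f) ^ 2 ∧
    f ⬝ᵥ (M *ᵥ f) = ∑ i, hM.eigenvalues i * ((hM.eigenvectorBasis i : Fin n → ℝ) ⬝ᵥ f) ^ 2 := by
  set B := hM.eigenvectorBasis with hB
  have h1 : ∀ g : Fin n → ℝ, f ⬝ᵥ g =
      ∑ i, ((B i : Fin n → ℝ) ⬝ᵥ f) * ((B i : Fin n → ℝ) ⬝ᵥ g) := by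
    intro g
    have := B.sum_inner_mul_inner (WithLp.toLp 2 f) (WithLp.toLp 2 g)
    rw [inner_eq_dot] at this
    simp only [WithLp.ofLp_toLp] at this
    rw [← this]
    refine Finset.sum_congr rfl fun i _ => ?_
    rw [inner_eq_dot, inner_eq_dot]
    simp only [WithLp.ofLp_toLp]
    have : (f : Fin n → ℝ) ⬝ᵥ (B i : Fin n → ℝ) = (B i : Fin n → ℝ) ⬝ᵥ f :=
      dotProduct_comm _ _
    rw [this]
  constructor
  · rw [h1 f]; exact Finset.sum_congr rfl fun i _ => (sq _).symm
  · rw [h1 (M *ᵥ f)]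
    refine Finset.sum_congr rfl fun i _ => ?_
    have h2 : (B i : Fin n → ℝ) ⬝ᵥ (M *ᵥ f) = hM.eigenvalues i * ((B i : Fin n → ℝ) ⬝ᵥ f) := by
      have h3 : M *ᵥ (B i : Fin n → ℝ) = hM.eigenvalues i • (B i : Fin n → ℝ) :=
        hM.mulVec_eigenvectorBasis i
      rw [dot_mulVec_symm hM, h3, smul_dotProduct]
      simp
    rw [h2]; ring

lemma key_two_eigs {n : ℕ} (hn : 0 < n) {M : Matrix (Fin n) (Fin n) ℝ} (hM : M.IsHermitian)
    (D : ℝ) (v1 v2 : Fin n → ℝ) (x y : Fin n)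
    (h1x : v1 x = 1) (h2x : v2 x = 0) (h1y : v1 y = 0) (h2y : v2 y = 1)
    (hray : ∀ a b : ℝ,
      (fun u => a * v1 u + b * v2 u) ⬝ᵥ (M *ᵥ fun u => a * v1 u + b * v2 u)
        ≤ D * ((fun u => a * v1 u + b * v2 u) ⬝ᵥ fun u => a * v1 u + b * v2 u)) :
    2 ≤ (univ.filter fun i => hM.eigenvalues i ≤ D).card := by
  by_contra hcon
  have hcard : (univ.filter fun i => hM.eigenvalues i ≤ D).card ≤ 1 := by omega
  -- find i₀ such that all other eigenvalues are > D
  obtain ⟨i₀, hbig⟩ : ∃ i₀ : Fin n, ∀ i, i ≠ i₀ → D < hM.eigenvalues i := by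
    rcases (univ.filter fun i => hM.eigenvalues i ≤ D).eq_empty_or_nonempty with he | ⟨i₀, hi₀⟩
    · refine ⟨⟨0, hn⟩, fun i _ => ?_⟩
      by_contra h
      have : i ∈ (univ.filter fun i => hM.eigenvalues i ≤ D) := by
        simp [not_lt.mp h]
      rw [he] at this; simp at this
    · refine ⟨i₀, fun i hne => ?_⟩
      by_contra h
      have hi : i ∈ (univ.filter fun i => hM.eigenvalues i ≤ D) := by
        simp [not_lt.mp h]
      have : ({i, i₀} : Finset (Fin n)) ⊆ univ.filter fun i => hM.eigenvalues i ≤ D := by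
        intro t ht
        simp only [Finset.mem_insert, Finset.mem_singleton] at ht
        rcases ht with rfl | rfl
        · exact hi
        · exact hi₀
      have := Finset.card_le_card this
      rw [Finset.card_pair hne] at this
      omega
  set B := hM.eigenvectorBasis with hB
  set c1 : ℝ := (B i₀ : Fin n → ℝ) ⬝ᵥ v1 with hc1
  set c2 : ℝ := (B i₀ : Fin n → ℝ) ⬝ᵥ v2 with hc2
  obtain ⟨a, b, hab, horth⟩ : ∃ a b : ℝ, ¬(a = 0 ∧ b = 0) ∧ a * c1 + b * c2 = 0 := by
    by_cases h : c1 = 0 ∧ c2 = 0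
    · exact ⟨1, 0, by simp, by simp [h.1]⟩
    · exact ⟨c2, -c1, fun hh => h ⟨by linarith [hh.2], by
        have := hh.1; simpa using this⟩, by ring⟩
  set z : Fin n → ℝ := fun u => a * v1 u + b * v2 u with hz
  set co : Fin n → ℝ := fun i => (B i : Fin n → ℝ) ⬝ᵥ z with hco
  obtain ⟨hs1, hs2⟩ := spectral_sum hM z
  have horthz : co i₀ = 0 := by
    have : (B i₀ : Fin n → ℝ) ⬝ᵥ z = a * c1 + b * c2 := by
      simp only [hz, hc1, hc2, dotProduct, Finset.mul_sum]
      rw [← Finset.sum_add_distrib]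
      exact Finset.sum_congr rfl fun t _ => by ring
    simpa [hco, this] using horth
  have hzz : 0 < z ⬝ᵥ z := by
    have hnn : ∀ t, 0 ≤ z t * z t := fun t => mul_self_nonneg _
    rcases not_and_or.mp hab with ha | hb
    · have hx' : z x = a := by simp [hz, h1x, h2x]
      have : z x * z x ≤ z ⬝ᵥ z := by
        simpa [dotProduct] using Finset.single_le_sum (f := fun t => z t * z t)
          (fun t _ => hnn t) (Finset.mem_univ x)
      have : 0 < z x * z x := by rw [hx']; exact mul_self_pos.mpr ha
      calc (0:ℝ) < z x * z x := this
        _ ≤ z ⬝ᵥ z := by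
          simpa [dotProduct] using Finset.single_le_sum (f := fun t => z t * z t)
            (fun t _ => hnn t) (Finset.mem_univ x)
    · have hy' : z y = b := by simp [hz, h1y, h2y]
      have : 0 < z y * z y := by rw [hy']; exact mul_self_pos.mpr hb
      calc (0:ℝ) < z y * z y := this
        _ ≤ z ⬝ᵥ z := by
          simpa [dotProduct] using Finset.single_le_sum (f := fun t => z t * z t)
            (fun t _ => hnn t) (Finset.mem_univ y)
  -- there is an index with nonzero coefficient
  obtain ⟨j, hj⟩ : ∃ j, co j ≠ 0 := by
    by_contra hall
    push_neg at hall
    rw [hs1] at hzz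
    have : ∑ i, co i ^ 2 = 0 := by
      refine Finset.sum_eq_zero fun i _ => ?_
      rw [hall i]; ring
    rw [this] at hzz; exact lt_irrefl _ hzz
  have hji₀ : j ≠ i₀ := fun h => hj (h ▸ horthz)
  -- the sum of (λ i - D) * co i ^2 is ≤ 0 but also > 0
  have hle : ∑ i, (hM.eigenvalues i - D) * co i ^ 2 ≤ 0 := by
    have := hray a b
    rw [← hz] at this
    rw [hs1, hs2, Finset.mul_sum] at this
    have h2 : ∑ i, (hM.eigenvalues i - D) * co i ^ 2
        = (∑ i, hM.eigenvalues i * co i ^ 2) - ∑ i, D * co i ^ 2 := by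
      rw [← Finset.sum_sub_distrib]
      exact Finset.sum_congr rfl fun i _ => by ring
    rw [h2]; linarith
  have hgt : 0 < ∑ i, (hM.eigenvalues i - D) * co i ^ 2 := by
    have hterm : ∀ i ∈ univ, 0 ≤ (hM.eigenvalues i - D) * co i ^ 2 := by
      intro i _
      by_cases h : i = i₀
      · subst h; rw [horthz]; simp
      · have := hbig i h
        have : 0 ≤ hM.eigenvalues i - D := by linarith
        positivity
    have hjpos : 0 < (hM.eigenvalues j - D) * co j ^ 2 := by
      have h1 := hbig j hji₀
      have h2 : 0 < co j ^ 2 := by positivity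
      nlinarith
    calc (0:ℝ) < (hM.eigenvalues j - D) * co j ^ 2 := hjpos
      _ ≤ ∑ i, (hM.eigenvalues i - D) * co i ^ 2 :=
        Finset.single_le_sum hterm (Finset.mem_univ j)
  linarith

lemma sLap_posSemidef {n : ℕ} (G : SimpleGraph (Fin n)) (hQ : (sLap G).IsHermitian) :
    (sLap G).PosSemidef := by
  rw [Matrix.posSemidef_iff_dotProduct_mulVec]
  refine ⟨hQ, fun x => ?_⟩
  have hdeg : ∀ u, (G.degree u : ℝ) = ∑ v, (G.adjMatrix ℝ) u v := by
    intro u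
    simp [SimpleGraph.adjMatrix_apply, SimpleGraph.degree, SimpleGraph.neighborFinset_eq_filter,
      Finset.sum_boole]
  have hA : ∀ u v, (G.adjMatrix ℝ) u v = (G.adjMatrix ℝ) v u := by
    intro u v; simp [SimpleGraph.adjMatrix_apply, G.adj_comm]
  have expand : star x ⬝ᵥ (sLap G *ᵥ x)
      = ∑ u, ∑ v, (G.adjMatrix ℝ) u v * (x u ^ 2 + x u * x v) := by
    simp only [star_trivial, sLap, Matrix.add_mulVec, dotProduct_add]
    have hd' : x ⬝ᵥ (Matrix.diagonal fun v => (G.degree v : ℝ)) *ᵥ x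
        = ∑ u, ∑ v, (G.adjMatrix ℝ) u v * x u ^ 2 := by
      simp only [dotProduct, Matrix.mulVec_diagonal]
      refine Finset.sum_congr rfl fun u _ => ?_
      rw [hdeg u, Finset.sum_mul, Finset.mul_sum]
      exact Finset.sum_congr rfl fun v _ => by ring
    have ha' : x ⬝ᵥ (G.adjMatrix ℝ) *ᵥ x
        = ∑ u, ∑ v, (G.adjMatrix ℝ) u v * (x u * x v) := by
      simp only [dotProduct, Matrix.mulVec]
      refine Finset.sum_congr rfl fun u _ => ?_
      rw [Finset.mul_sum]
      exact Finset.sum_congr rfl fun v _ => by ring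
    rw [hd', ha', ← Finset.sum_add_distrib]
    refine Finset.sum_congr rfl fun u _ => ?_
    rw [← Finset.sum_add_distrib]
    exact Finset.sum_congr rfl fun v _ => by ring
  have hswap : ∑ u, ∑ v, (G.adjMatrix ℝ) u v * (x u ^ 2 + x u * x v)
      = ∑ u, ∑ v, (G.adjMatrix ℝ) u v * (x v ^ 2 + x v * x u) := by
    rw [Finset.sum_comm]
    refine Finset.sum_congr rfl fun i _ => Finset.sum_congr rfl fun j _ => ?_
    rw [hA j i]
  have hkey : 2 * (star x ⬝ᵥ (sLap G *ᵥ x))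
      = ∑ u, ∑ v, (G.adjMatrix ℝ) u v * (x u + x v) ^ 2 := by
    have h2 : 2 * (star x ⬝ᵥ (sLap G *ᵥ x))
        = (∑ u, ∑ v, (G.adjMatrix ℝ) u v * (x u ^ 2 + x u * x v))
          + ∑ u, ∑ v, (G.adjMatrix ℝ) u v * (x v ^ 2 + x v * x u) := by
      rw [← hswap, expand]; ring
    rw [h2, ← Finset.sum_add_distrib]
    refine Finset.sum_congr rfl fun u _ => ?_
    rw [← Finset.sum_add_distrib]
    exact Finset.sum_congr rfl fun v _ => by ring
  have hnn : 0 ≤ ∑ u, ∑ v, (G.adjMatrix ℝ) u v * (x u + x v) ^ 2 := by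
    refine Finset.sum_nonneg fun u _ => Finset.sum_nonneg fun v _ => ?_
    have : (0:ℝ) ≤ (G.adjMatrix ℝ) u v := by
      simp only [SimpleGraph.adjMatrix_apply]; positivity
    positivity
  nlinarith [hkey, hnn]

-- delta vector
noncomputable def ev {n : ℕ} (x : Fin n) : Fin n → ℝ := fun u => if u = x then 1 else 0

lemma sum_ev_mul {n : ℕ} (a b c : ℝ) (x y w : Fin n) (g : Fin n → ℝ) :
    (∑ u, (a * ev x u + b * ev y u + c * ev w u) * g u)
      = a * g x + b * g y + c * g w := by
  simp [ev, add_mul, Finset.sum_add_distrib, ite_mul, mul_assoc]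

lemma quad3 {n : ℕ} (M : Matrix (Fin n) (Fin n) ℝ) (a b c : ℝ) (x y w : Fin n) :
    (fun u => a * ev x u + b * ev y u + c * ev w u) ⬝ᵥ
      (M *ᵥ fun u => a * ev x u + b * ev y u + c * ev w u)
    = a * (a * M x x + b * M x y + c * M x w)
      + b * (a * M y x + b * M y y + c * M y w)
      + c * (a * M w x + b * M w y + c * M w w) := by
  have hMv : ∀ u, (M *ᵥ fun v => a * ev x v + b * ev y v + c * ev w v) u
      = a * M u x + b * M u y + c * M u w := by
    intro u
    have := sum_ev_mul a b c x y w (fun v => M u v)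
    simpa [Matrix.mulVec, dotProduct, mul_comm] using this
  calc (fun u => a * ev x u + b * ev y u + c * ev w u) ⬝ᵥ
      (M *ᵥ fun u => a * ev x u + b * ev y u + c * ev w u)
      = ∑ u, (a * ev x u + b * ev y u + c * ev w u)
          * (a * M u x + b * M u y + c * M u w) := by
        unfold dotProduct; exact Finset.sum_congr rfl fun u _ => by rw [hMv u]
    _ = _ := by
        rw [sum_ev_mul a b c x y w (fun u => a * M u x + b * M u y + c * M u w)]

lemma sum_ev_mul2 {n : ℕ} (a b : ℝ) (x y : Fin n) (g : Fin n → ℝ) :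
    (∑ u, (a * ev x u + b * ev y u) * g u) = a * g x + b * g y := by
  simp [ev, add_mul, Finset.sum_add_distrib, ite_mul, mul_assoc]

lemma quad2 {n : ℕ} (M : Matrix (Fin n) (Fin n) ℝ) (a b : ℝ) (x y : Fin n) :
    (fun u => a * ev x u + b * ev y u) ⬝ᵥ (M *ᵥ fun u => a * ev x u + b * ev y u)
    = a * (a * M x x + b * M x y) + b * (a * M y x + b * M y y) := by
  have hMv : ∀ u, (M *ᵥ fun v => a * ev x v + b * ev y v) u
      = a * M u x + b * M u y := by
    intro u
    have := sum_ev_mul2 a b x y (fun v => M u v)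
    simpa [Matrix.mulVec, dotProduct, mul_comm] using this
  calc (fun u => a * ev x u + b * ev y u) ⬝ᵥ (M *ᵥ fun u => a * ev x u + b * ev y u)
      = ∑ u, (a * ev x u + b * ev y u) * (a * M u x + b * M u y) := by
        unfold dotProduct; exact Finset.sum_congr rfl fun u _ => by rw [hMv u]
    _ = _ := by rw [sum_ev_mul2 a b x y (fun u => a * M u x + b * M u y)]

lemma sLap_diag {n : ℕ} (G : SimpleGraph (Fin n)) (u : Fin n) :
    sLap G u u = G.degree u := by
  simp [sLap, Matrix.add_apply, Matrix.diagonal_apply_eq, SimpleGraph.adjMatrix_apply]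

lemma sLap_off {n : ℕ} (G : SimpleGraph (Fin n)) {u v : Fin n} (h : u ≠ v) :
    sLap G u v = if G.Adj u v then 1 else 0 := by
  simp [sLap, Matrix.add_apply, Matrix.diagonal_apply_ne _ h, SimpleGraph.adjMatrix_apply]

def GoodPair {n : ℕ} (M : Matrix (Fin n) (Fin n) ℝ) (D : ℝ) : Prop :=
  ∃ (v1 v2 : Fin n → ℝ) (x y : Fin n),
    v1 x = 1 ∧ v2 x = 0 ∧ v1 y = 0 ∧ v2 y = 1 ∧
    ∀ a b : ℝ,
      (fun u => a * v1 u + b * v2 u) ⬝ᵥ (M *ᵥ fun u => a * v1 u + b * v2 u)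
        ≤ D * ((fun u => a * v1 u + b * v2 u) ⬝ᵥ fun u => a * v1 u + b * v2 u)

lemma dot_self_two {n : ℕ} (a b : ℝ) (x y : Fin n) (hxy : x ≠ y) :
    ((fun u => a * ev x u + b * ev y u) ⬝ᵥ fun u => a * ev x u + b * ev y u)
      = a ^ 2 + b ^ 2 := by
  have := quad2 (1 : Matrix (Fin n) (Fin n) ℝ) a b x y
  rw [Matrix.one_mulVec] at this
  rw [this, Matrix.one_apply_eq, Matrix.one_apply_eq, Matrix.one_apply_ne hxy,
    Matrix.one_apply_ne hxy.symm]
  ring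

lemma configA {n : ℕ} (G : SimpleGraph (Fin n)) (D : ℝ) (x y : Fin n) (hxy : x ≠ y)
    (hadj : ¬ G.Adj x y) (hx : (G.degree x : ℝ) ≤ D) (hy : (G.degree y : ℝ) ≤ D) :
    GoodPair (sLap G) D := by
  refine ⟨ev x, ev y, x, y, by simp [ev], by simp [ev, hxy], by simp [ev, hxy.symm],
    by simp [ev], fun a b => ?_⟩
  rw [quad2, dot_self_two a b x y hxy, sLap_diag, sLap_diag, sLap_off G hxy,
    sLap_off G (Ne.symm hxy)]
  have hadj' : ¬ G.Adj y x := fun h => hadj h.symm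
  rw [if_neg hadj, if_neg hadj']
  nlinarith [sq_nonneg a, sq_nonneg b]

lemma dot_self_three {n : ℕ} (a b c : ℝ) (x y w : Fin n) (hxy : x ≠ y) (hxw : x ≠ w)
    (hyw : y ≠ w) :
    ((fun u => a * ev x u + b * ev y u + c * ev w u) ⬝ᵥ
      fun u => a * ev x u + b * ev y u + c * ev w u) = a ^ 2 + b ^ 2 + c ^ 2 := by
  have := quad3 (1 : Matrix (Fin n) (Fin n) ℝ) a b c x y w
  rw [Matrix.one_mulVec] at this
  rw [this, Matrix.one_apply_eq, Matrix.one_apply_eq, Matrix.one_apply_eq,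
    Matrix.one_apply_ne hxy, Matrix.one_apply_ne hxy.symm, Matrix.one_apply_ne hxw,
    Matrix.one_apply_ne hxw.symm, Matrix.one_apply_ne hyw, Matrix.one_apply_ne hyw.symm]
  ring

lemma configB {n : ℕ} (G : SimpleGraph (Fin n)) (D : ℝ) (x y w : Fin n) (hxy : x ≠ y)
    (hxw : x ≠ w) (hyw : y ≠ w) (haxw : G.Adj x w) (hayw : G.Adj y w)
    (hx : (G.degree x : ℝ) ≤ D) (hy : (G.degree y : ℝ) ≤ D) (hw : (G.degree w : ℝ) ≤ D) :
    GoodPair (sLap G) D := by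
  refine ⟨fun u => ev x u - ev w u, fun u => ev y u - ev w u, x, y,
    by simp [ev, hxw, hxw.symm], by simp [ev, hxy, hxy.symm, hxw, hxw.symm],
    by simp [ev, hxy, hxy.symm, hyw, hyw.symm], by simp [ev, hyw, hyw.symm],
    fun a b => ?_⟩
  have hz : (fun u => a * (ev x u - ev w u) + b * (ev y u - ev w u))
      = fun u => a * ev x u + b * ev y u + (-(a + b)) * ev w u := by
    funext u; ring
  rw [hz, quad3, dot_self_three a b (-(a+b)) x y w hxy hxw hyw,
    sLap_diag, sLap_diag, sLap_diag, sLap_off G hxy, sLap_off G hxy.symm,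
    sLap_off G hxw, sLap_off G hxw.symm, sLap_off G hyw, sLap_off G hyw.symm]
  rw [if_pos haxw, if_pos haxw.symm, if_pos hayw, if_pos hayw.symm]
  by_cases haxy : G.Adj x y
  · rw [if_pos haxy, if_pos haxy.symm]
    nlinarith [sq_nonneg a, sq_nonneg b, sq_nonneg (a + b),
      mul_le_mul_of_nonneg_right hx (sq_nonneg a),
      mul_le_mul_of_nonneg_right hy (sq_nonneg b),
      mul_le_mul_of_nonneg_right hw (sq_nonneg (a + b))]
  · have haxy' : ¬ G.Adj y x := fun h => haxy h.symm
    rw [if_neg haxy, if_neg haxy']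
    nlinarith [sq_nonneg a, sq_nonneg b, sq_nonneg (a + b), sq_nonneg (a - b),
      mul_le_mul_of_nonneg_right hx (sq_nonneg a),
      mul_le_mul_of_nonneg_right hy (sq_nonneg b),
      mul_le_mul_of_nonneg_right hw (sq_nonneg (a + b))]

lemma configC {n : ℕ} (G : SimpleGraph (Fin n)) (D : ℝ) (x y w : Fin n) (hxy : x ≠ y)
    (hxw : x ≠ w) (hyw : y ≠ w) (haxy : G.Adj x y) (hawx : ¬ G.Adj w x)
    (hawy : ¬ G.Adj w y)
    (hsum : (G.degree x : ℝ) + (G.degree y : ℝ) ≤ 2 * D + 2)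
    (hw : (G.degree w : ℝ) ≤ D) :
    GoodPair (sLap G) D := by
  refine ⟨fun u => ev x u - ev y u, ev w, x, w,
    by simp [ev, hxy, hxy.symm], by simp [ev, hxw, hxw.symm],
    by simp [ev, hxw, hxw.symm, hyw, hyw.symm], by simp [ev], fun a b => ?_⟩
  have hz : (fun u => a * (ev x u - ev y u) + b * ev w u)
      = fun u => a * ev x u + (-a) * ev y u + b * ev w u := by
    funext u; ring
  have hawx' : ¬ G.Adj x w := fun h => hawx h.symm
  have hawy' : ¬ G.Adj y w := fun h => hawy h.symm
  rw [hz, quad3, dot_self_three a (-a) b x y w hxy hxw hyw,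
    sLap_diag, sLap_diag, sLap_diag, sLap_off G hxy, sLap_off G hxy.symm,
    sLap_off G hxw, sLap_off G hxw.symm, sLap_off G hyw, sLap_off G hyw.symm]
  rw [if_pos haxy, if_pos haxy.symm, if_neg hawx', if_neg hawy', if_neg hawx, if_neg hawy]
  nlinarith [sq_nonneg a, sq_nonneg b,
    mul_le_mul_of_nonneg_right hw (sq_nonneg b)]

lemma deg_le_of_subset {n : ℕ} (G : SimpleGraph (Fin n)) (v : Fin n) (s : Finset (Fin n))
    (h : G.neighborFinset v ⊆ s) : G.degree v ≤ s.card := by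
  rw [← SimpleGraph.card_neighborFinset_eq_degree]
  exact Finset.card_le_card h

lemma le_deg_of_subset {n : ℕ} (G : SimpleGraph (Fin n)) (v : Fin n) (s : Finset (Fin n))
    (h : s ⊆ G.neighborFinset v) : s.card ≤ G.degree v := by
  rw [← SimpleGraph.card_neighborFinset_eq_degree]
  exact Finset.card_le_card h

lemma exists_goodPair {n : ℕ} (hn : 3 ≤ n) (G : SimpleGraph (Fin n))
    (d : Fin n → ℕ) (hd : Antitone d) (σ : Equiv.Perm (Fin n))
    (hdσ : ∀ i, d i = G.degree (σ i)) :
    GoodPair (sLap G) ((d ⟨2, hn⟩ : ℕ) : ℝ) := by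
  set D : ℝ := ((d ⟨2, by omega⟩ : ℕ) : ℝ) with hD
  have hinj := σ.injective
  have hLow : ∀ i : Fin n, 2 ≤ (i : ℕ) → (G.degree (σ i) : ℝ) ≤ D := by
    intro i hi
    have h1 : d i ≤ d ⟨2, by omega⟩ := hd (by rw [Fin.le_def]; exact hi)
    rw [← hdσ i, hD]
    exact_mod_cast h1
  have hw : (G.degree (σ ⟨2, by omega⟩) : ℝ) = D := by rw [← hdσ]
  set w : Fin n := σ ⟨2, by omega⟩ with hwdef
  rcases le_or_gt 5 n with h5 | h5
  · -- n ≥ 5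
    set x : Fin n := σ ⟨3, by omega⟩ with hxdef
    set y : Fin n := σ ⟨4, by omega⟩ with hydef
    have hxw : x ≠ w := fun h => by
      have := congrArg Fin.val (hinj h); simp at this
    have hyw : y ≠ w := fun h => by
      have := congrArg Fin.val (hinj h); simp at this
    have hxy : x ≠ y := fun h => by
      have := congrArg Fin.val (hinj h); simp at this
    have hx : (G.degree x : ℝ) ≤ D := hLow _ (by norm_num)
    have hy : (G.degree y : ℝ) ≤ D := hLow _ (by norm_num)
    by_cases haxw : G.Adj x w
    · by_cases hayw : G.Adj y w
      · exact configB G D x y w hxy hxw hyw haxw hayw hx hy hw.le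
      · exact configA G D w y hyw.symm (fun h => hayw h.symm) hw.le hy
    · exact configA G D w x hxw.symm (fun h => haxw h.symm) hw.le hx
  · have h34 : n = 3 ∨ n = 4 := by omega
    rcases h34 with rfl | rfl
    · -- n = 3
      set p : Fin 3 := σ ⟨0, by omega⟩ with hpdef
      set q : Fin 3 := σ ⟨1, by omega⟩ with hqdef
      have hpq : p ≠ q := fun h => by have := congrArg Fin.val (hinj h); simp at this
      have hpw : p ≠ w := fun h => by have := congrArg Fin.val (hinj h); simp at this
      have hqw : q ≠ w := fun h => by have := congrArg Fin.val (hinj h); simp at this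
      have hcover : ∀ t : Fin 3, t = p ∨ t = q ∨ t = w := by
        intro t
        have hlt := (σ.symm t).isLt
        have hj : (σ.symm t).val = 0 ∨ (σ.symm t).val = 1 ∨ (σ.symm t).val = 2 := by omega
        have ht : σ (σ.symm t) = t := σ.apply_symm_apply t
        rcases hj with h | h | h
        · left; rw [← ht, hpdef]; congr 1; exact Fin.ext h
        · right; left; rw [← ht, hqdef]; congr 1; exact Fin.ext h
        · right; right; rw [← ht, hwdef]; congr 1; exact Fin.ext h
      have hdp3 : G.degree p ≤ 2 := by
        have := G.degree_lt_card_verts p; simp at this; omega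
      have hdq3 : G.degree q ≤ 2 := by
        have := G.degree_lt_card_verts q; simp at this; omega
      by_cases hapw : G.Adj p w
      · by_cases haqw : G.Adj q w
        · -- both adjacent to w : configB
          have h2w : 2 ≤ G.degree w := by
            have : ({p, q} : Finset (Fin 3)) ⊆ G.neighborFinset w := by
              intro t ht
              simp only [Finset.mem_insert, Finset.mem_singleton] at ht
              rcases ht with rfl | rfl
              · exact (SimpleGraph.mem_neighborFinset _ _ _).mpr hapw.symm
              · exact (SimpleGraph.mem_neighborFinset _ _ _).mpr haqw.symm
            have := le_deg_of_subset G w _ this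
            rwa [Finset.card_pair hpq] at this
          have hp : (G.degree p : ℝ) ≤ D := by
            rw [← hw]; exact_mod_cast le_trans hdp3 h2w
          have hq : (G.degree q : ℝ) ≤ D := by
            rw [← hw]; exact_mod_cast le_trans hdq3 h2w
          exact configB G D p q w hpq hpw hqw hapw haqw hp hq hw.le
        · -- q not adjacent to w : configA (w, q)
          have hdq1 : G.degree q ≤ 1 := by
            have hsub : G.neighborFinset q ⊆ {p} := by
              intro t ht
              rw [SimpleGraph.mem_neighborFinset] at ht
              rcases hcover t with rfl | rfl | rfl
              · simp
              · exact absurd ht (G.irrefl)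
              · exact absurd ht haqw
            have := deg_le_of_subset G q _ hsub; simpa using this
          have h1w : 1 ≤ G.degree w := by
            have : ({p} : Finset (Fin 3)) ⊆ G.neighborFinset w := by
              intro t ht
              simp only [Finset.mem_singleton] at ht
              subst ht
              exact (SimpleGraph.mem_neighborFinset _ _ _).mpr hapw.symm
            have := le_deg_of_subset G w _ this; simpa using this
          have hq : (G.degree q : ℝ) ≤ D := by
            rw [← hw]; exact_mod_cast le_trans hdq1 h1w
          exact configA G D w q hqw.symm (fun h => haqw h.symm) hw.le hq
      · by_cases haqw : G.Adj q w
        · -- p not adjacent to w : configA (w, p)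
          have hdp1 : G.degree p ≤ 1 := by
            have hsub : G.neighborFinset p ⊆ {q} := by
              intro t ht
              rw [SimpleGraph.mem_neighborFinset] at ht
              rcases hcover t with rfl | rfl | rfl
              · exact absurd ht (G.irrefl)
              · simp
              · exact absurd ht hapw
            have := deg_le_of_subset G p _ hsub; simpa using this
          have h1w : 1 ≤ G.degree w := by
            have : ({q} : Finset (Fin 3)) ⊆ G.neighborFinset w := by
              intro t ht
              simp only [Finset.mem_singleton] at ht
              subst ht
              exact (SimpleGraph.mem_neighborFinset _ _ _).mpr haqw.symm
            have := le_deg_of_subset G w _ this; simpa using this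
          have hp : (G.degree p : ℝ) ≤ D := by
            rw [← hw]; exact_mod_cast le_trans hdp1 h1w
          exact configA G D w p hpw.symm (fun h => hapw h.symm) hw.le hp
        · -- w isolated
          have hawp : ¬ G.Adj w p := fun h => hapw h.symm
          have hawq : ¬ G.Adj w q := fun h => haqw h.symm
          have hdw0 : G.degree w = 0 := by
            have hsub : G.neighborFinset w ⊆ ∅ := by
              intro t ht
              rw [SimpleGraph.mem_neighborFinset] at ht
              rcases hcover t with rfl | rfl | rfl
              · exact absurd ht hawp
              · exact absurd ht hawq
              · exact absurd ht (G.irrefl)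
            have := deg_le_of_subset G w _ hsub; simpa using this
          have hD0 : D = 0 := by rw [← hw, hdw0]; simp
          by_cases hapq : G.Adj p q
          · have hdp1 : G.degree p ≤ 1 := by
              have hsub : G.neighborFinset p ⊆ {q} := by
                intro t ht
                rw [SimpleGraph.mem_neighborFinset] at ht
                rcases hcover t with rfl | rfl | rfl
                · exact absurd ht (G.irrefl)
                · simp
                · exact absurd ht hapw
              have := deg_le_of_subset G p _ hsub; simpa using this
            have hdq1 : G.degree q ≤ 1 := by
              have hsub : G.neighborFinset q ⊆ {p} := by
                intro t ht
                rw [SimpleGraph.mem_neighborFinset] at ht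
                rcases hcover t with rfl | rfl | rfl
                · simp
                · exact absurd ht (G.irrefl)
                · exact absurd ht haqw
              have := deg_le_of_subset G q _ hsub; simpa using this
            refine configC G D p q w hpq hpw hqw hapq hawp hawq ?_ hw.le
            rw [hD0]
            push_cast
            have : (G.degree p : ℝ) ≤ 1 := by exact_mod_cast hdp1
            have : (G.degree q : ℝ) ≤ 1 := by exact_mod_cast hdq1
            linarith [show (G.degree p : ℝ) ≤ 1 from by exact_mod_cast hdp1]
          · have hdp0 : G.degree p = 0 := by
              have hsub : G.neighborFinset p ⊆ ∅ := by
                intro t ht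
                rw [SimpleGraph.mem_neighborFinset] at ht
                rcases hcover t with rfl | rfl | rfl
                · exact absurd ht (G.irrefl)
                · exact absurd ht hapq
                · exact absurd ht hapw
              have := deg_le_of_subset G p _ hsub; simpa using this
            refine configA G D w p hpw.symm hawp hw.le ?_
            rw [hdp0, hD0]; simp
    · -- n = 4
      set p : Fin 4 := σ ⟨0, by omega⟩ with hpdef
      set q : Fin 4 := σ ⟨1, by omega⟩ with hqdef
      set u : Fin 4 := σ ⟨3, by omega⟩ with hudef
      have hpq : p ≠ q := fun h => by have := congrArg Fin.val (hinj h); simp at this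
      have hpw : p ≠ w := fun h => by have := congrArg Fin.val (hinj h); simp at this
      have hqw : q ≠ w := fun h => by have := congrArg Fin.val (hinj h); simp at this
      have hpu : p ≠ u := fun h => by have := congrArg Fin.val (hinj h); simp at this
      have hqu : q ≠ u := fun h => by have := congrArg Fin.val (hinj h); simp at this
      have huw : u ≠ w := fun h => by have := congrArg Fin.val (hinj h); simp at this
      have hcover : ∀ t : Fin 4, t = p ∨ t = q ∨ t = w ∨ t = u := by
        intro t
        have hlt := (σ.symm t).isLt
        have hj : (σ.symm t).val = 0 ∨ (σ.symm t).val = 1 ∨ (σ.symm t).val = 2 ∨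
            (σ.symm t).val = 3 := by omega
        have ht : σ (σ.symm t) = t := σ.apply_symm_apply t
        rcases hj with h | h | h | h
        · left; rw [← ht, hpdef]; congr 1; exact Fin.ext h
        · right; left; rw [← ht, hqdef]; congr 1; exact Fin.ext h
        · right; right; left; rw [← ht, hwdef]; congr 1; exact Fin.ext h
        · right; right; right; rw [← ht, hudef]; congr 1; exact Fin.ext h
      have hu : (G.degree u : ℝ) ≤ D := hLow _ (by norm_num)
      by_cases hauw : G.Adj u w
      · by_cases hpd : (G.degree p : ℝ) ≤ D
        · by_cases hapw : G.Adj p w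
          · exact configB G D p u w hpu hpw huw hapw hauw hpd hu hw.le
          · exact configA G D w p hpw.symm (fun h => hapw h.symm) hw.le hpd
        · by_cases hqd : (G.degree q : ℝ) ≤ D
          · by_cases haqw : G.Adj q w
            · exact configB G D q u w hqu hqw huw haqw hauw hqd hu hw.le
            · exact configA G D w q hqw.symm (fun h => haqw h.symm) hw.le hqd
          · exfalso
            push_neg at hpd hqd
            set k : ℕ := G.degree w with hkdef
            have hkD : D = (k : ℝ) := hw.symm
            have hpk : k < G.degree p := by
              rw [hkD] at hpd; exact_mod_cast hpd
            have hqk : k < G.degree q := by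
              rw [hkD] at hqd; exact_mod_cast hqd
            have huk : G.degree u ≤ k := by
              rw [hkD] at hu; exact_mod_cast hu
            have hp4 : G.degree p ≤ 3 := by
              have := G.degree_lt_card_verts p; simp at this; omega
            have hq4 : G.degree q ≤ 3 := by
              have := G.degree_lt_card_verts q; simp at this; omega
            have hk1 : 1 ≤ k := by
              have : ({u} : Finset (Fin 4)) ⊆ G.neighborFinset w := by
                intro t ht
                simp only [Finset.mem_singleton] at ht; subst ht
                exact (SimpleGraph.mem_neighborFinset _ _ _).mpr hauw.symm
              have := le_deg_of_subset G w _ this; simpa [hkdef] using this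
            have hk2 : k ≤ 2 := by omega
            rcases (by omega : k = 1 ∨ k = 2) with hk | hk
            · -- k = 1 : w's only neighbor is u; u's only neighbor is w
              have hawp : ¬ G.Adj w p := by
                intro h
                have hsub : ({u, p} : Finset (Fin 4)) ⊆ G.neighborFinset w := by
                  intro t ht
                  simp only [Finset.mem_insert, Finset.mem_singleton] at ht
                  rcases ht with rfl | rfl
                  · exact (SimpleGraph.mem_neighborFinset _ _ _).mpr hauw.symm
                  · exact (SimpleGraph.mem_neighborFinset _ _ _).mpr h
                have := le_deg_of_subset G w _ hsub
                rw [Finset.card_pair (fun hh => hpu (hh.symm))] at this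
                omega
              have haup : ¬ G.Adj u p := by
                intro h
                have hsub : ({w, p} : Finset (Fin 4)) ⊆ G.neighborFinset u := by
                  intro t ht
                  simp only [Finset.mem_insert, Finset.mem_singleton] at ht
                  rcases ht with rfl | rfl
                  · exact (SimpleGraph.mem_neighborFinset _ _ _).mpr hauw
                  · exact (SimpleGraph.mem_neighborFinset _ _ _).mpr h
                have := le_deg_of_subset G u _ hsub
                rw [Finset.card_pair (fun hh => hpw hh.symm)] at this
                omega
              have hsub : G.neighborFinset p ⊆ {q} := by
                intro t ht
                rw [SimpleGraph.mem_neighborFinset] at ht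
                rcases hcover t with rfl | rfl | rfl | rfl
                · exact absurd ht (G.irrefl)
                · simp
                · exact absurd ht.symm hawp
                · exact absurd ht.symm haup
              have := deg_le_of_subset G p _ hsub
              simp at this; omega
            · -- k = 2 : p and q adjacent to everything, w has 3 neighbors
              have hadjall : ∀ (v t : Fin 4), G.degree v = 3 → t ≠ v → G.Adj v t := by
                intro v t hv htv
                by_contra hnadj
                have hsub : G.neighborFinset v ⊆ (Finset.univ.erase v).erase t := by
                  intro s hs
                  rw [SimpleGraph.mem_neighborFinset] at hs
                  refine Finset.mem_erase.mpr ⟨fun hh => hnadj (hh ▸ hs), ?_⟩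
                  exact Finset.mem_erase.mpr ⟨fun hh => G.irrefl (hh ▸ hs), Finset.mem_univ _⟩
                have := deg_le_of_subset G v _ hsub
                have hc : ((Finset.univ.erase v).erase t).card ≤ 2 := by
                  have h1 : (Finset.univ.erase v).card = 3 := by
                    rw [Finset.card_erase_of_mem (Finset.mem_univ _)]; simp
                  have h2 : ((Finset.univ.erase v).erase t).card = 2 := by
                    rw [Finset.card_erase_of_mem
                      (Finset.mem_erase.mpr ⟨htv, Finset.mem_univ _⟩), h1]
                  omega
                omega
              have hdp3 : G.degree p = 3 := by omega
              have hdq3 : G.degree q = 3 := by omega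
              have hapw : G.Adj p w := hadjall p w hdp3 (fun h => hpw h.symm)
              have haqw : G.Adj q w := hadjall q w hdq3 (fun h => hqw h.symm)
              have hsub : ({p, q, u} : Finset (Fin 4)) ⊆ G.neighborFinset w := by
                intro t ht
                simp only [Finset.mem_insert, Finset.mem_singleton] at ht
                rcases ht with rfl | rfl | rfl
                · exact (SimpleGraph.mem_neighborFinset _ _ _).mpr hapw.symm
                · exact (SimpleGraph.mem_neighborFinset _ _ _).mpr haqw.symm
                · exact (SimpleGraph.mem_neighborFinset _ _ _).mpr hauw.symm
              have hle := le_deg_of_subset G w _ hsub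
              have hc3 : ({p, q, u} : Finset (Fin 4)).card = 3 := by
                rw [Finset.card_insert_of_notMem (by simp [hpq, hpu]),
                  Finset.card_pair hqu]
              omega
      · exact configA G D w u huw.symm (fun h => hauw h.symm) hw.le hu


theorem stmt17 {n : ℕ} (hn : 3 ≤ n) (G : SimpleGraph (Fin n))
    (hQ : (sLap G).IsHermitian)
    (d : Fin n → ℕ) (hd : Antitone d) (σ : Equiv.Perm (Fin n))
    (hdσ : ∀ i, d i = G.degree (σ i))
    (q : Fin n → ℝ) (hq : Antitone q) (τ : Equiv.Perm (Fin n))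
    (hqτ : ∀ i, q i = hQ.eigenvalues (τ i)) :
    q ⟨n - 2, by omega⟩ ≤ (d ⟨2, by omega⟩ : ℝ) ∧
      2 ≤ eigCount hQ (Set.Icc (0 : ℝ) (d ⟨2, by omega⟩ : ℝ)) := by
  obtain ⟨v1, v2, x, y, h1x, h2x, h1y, h2y, hray⟩ := exists_goodPair hn G d hd σ hdσ
  have hkey := key_two_eigs (show 0 < n by omega) hQ _ v1 v2 x y h1x h2x h1y h2y hray
  set D : ℝ := ((d ⟨2, by omega⟩ : ℕ) : ℝ) with hD
  have hnonneg : ∀ i, 0 ≤ hQ.eigenvalues i := fun i =>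
    (sLap_posSemidef G hQ).eigenvalues_nonneg i
  constructor
  · by_contra hcon
    push_neg at hcon
    have hsub : (univ.filter fun i => q i ≤ D) ⊆ {(⟨n - 1, by omega⟩ : Fin n)} := by
      intro i hi
      simp only [Finset.mem_filter] at hi
      simp only [Finset.mem_singleton]
      by_contra hne
      have hival : (i : ℕ) ≤ n - 2 := by
        have h1 := i.isLt
        have h2 : (i : ℕ) ≠ n - 1 := fun h => hne (Fin.ext h)
        omega
      have hle : q ⟨n - 2, by omega⟩ ≤ q i := hq (by rw [Fin.le_def]; exact hival)
      have := hi.2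
      linarith
    have hc1 : (univ.filter fun i => q i ≤ D).card ≤ 1 :=
      le_trans (Finset.card_le_card hsub) (by simp)
    have hbij : (univ.filter fun i => q i ≤ D).card
        = (univ.filter fun j => hQ.eigenvalues j ≤ D).card := by
      apply Finset.card_bij (fun i _ => τ i)
      · intro i hi
        simp only [Finset.mem_filter] at hi ⊢
        exact ⟨Finset.mem_univ _, by rw [← hqτ i]; exact hi.2⟩
      · intro i _ j _ h; exact τ.injective h
      · intro j hj
        refine ⟨τ.symm j, ?_, by simp⟩
        simp only [Finset.mem_filter] at hj ⊢
        exact ⟨Finset.mem_univ _, by rw [hqτ, τ.apply_symm_apply]; exact hj.2⟩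
    omega
  · show 2 ≤ eigCount hQ (Set.Icc (0 : ℝ) D)
    unfold eigCount
    refine le_trans hkey (Finset.card_le_card ?_)
    intro i hi
    simp only [Finset.mem_filter] at hi ⊢
    exact ⟨hi.1, Set.mem_Icc.mpr ⟨hnonneg i, hi.2⟩⟩
end

section
/- Let G be a simple graph on n vertices and let v be a vertex with d(v) = d_n (minimum degree) such that V(G) \ N[v] contains three vertices a, b, c that are pairwise adjacent, with d_n ≥ 1. Then the 4×4 principal submatrix of Q(G) indexed by {v, a, b, c} has at least three eigenvalues not exceeding max(d(a), d(b), d(c)); consequently G has at least three signless Laplacian eigenvalues in [0, d_1]. -/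
open Finset
open scoped Classical

open Matrix
set_option maxHeartbeats 1000000

lemma sum_dotProduct' {ι n : Type*} [Fintype n] (s : Finset ι) (f : ι → n → ℝ) (v : n → ℝ) :
    (∑ i ∈ s, f i) ⬝ᵥ v = ∑ i ∈ s, f i ⬝ᵥ v := by
  simp only [dotProduct, Finset.sum_apply, Finset.sum_mul]
  exact Finset.sum_comm

lemma dotProduct_sum' {ι n : Type*} [Fintype n] (s : Finset ι) (v : n → ℝ) (f : ι → n → ℝ) :
    v ⬝ᵥ (∑ i ∈ s, f i) = ∑ i ∈ s, v ⬝ᵥ f i := by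
  simp only [dotProduct, Finset.sum_apply, Finset.mul_sum]
  exact Finset.sum_comm

lemma key_count {N : ℕ} {M : Matrix (Fin N) (Fin N) ℝ} (hM : M.IsHermitian) (t : ℝ)
    (B : Matrix (Fin N) (Fin 3) ℝ) (hB : Function.Injective B.mulVecLin)
    (hform : ∀ z : Fin 3 → ℝ,
      (B *ᵥ z) ⬝ᵥ (M *ᵥ (B *ᵥ z)) ≤ t * ((B *ᵥ z) ⬝ᵥ (B *ᵥ z))) :
    3 ≤ (Finset.univ.filter fun i => hM.eigenvalues i ≤ t).card := by
  by_contra hlt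
  push_neg at hlt
  set P : Finset (Fin N) := Finset.univ.filter (fun i => t < hM.eigenvalues i) with hPdef
  have hsum : (Finset.univ.filter fun i => hM.eigenvalues i ≤ t).card + P.card = N := by
    have := Finset.card_filter_add_card_filter_not
      (s := (Finset.univ : Finset (Fin N))) (p := fun i => hM.eigenvalues i ≤ t)
    simpa [hPdef, not_le, Finset.card_univ] using this
  have hNP : N < P.card + 3 := by omega
  set f := hM.eigenvectorBasis with hf
  have horthF : Orthonormal ℝ (fun i : P => f i) :=
    (hM.eigenvectorBasis.orthonormal).comp _ Subtype.coe_injective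
  set W : Submodule ℝ (EuclideanSpace ℝ (Fin N)) := Submodule.span ℝ (Set.range (fun i : P => f i)) with hW
  have hWrank : Module.finrank ℝ W = P.card := by
    rw [finrank_span_eq_card horthF.linearIndependent, Fintype.card_coe]
  set L' : (Fin 3 → ℝ) →ₗ[ℝ] EuclideanSpace ℝ (Fin N) :=
    (WithLp.linearEquiv 2 ℝ (Fin N → ℝ)).symm.toLinearMap ∘ₗ B.mulVecLin with hL'
  set U : Submodule ℝ (EuclideanSpace ℝ (Fin N)) := LinearMap.range L' with hU
  have hL'inj : Function.Injective L' :=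
    (WithLp.linearEquiv 2 ℝ (Fin N → ℝ)).symm.injective.comp hB
  have hUrank : Module.finrank ℝ U = 3 := by
    rw [LinearMap.finrank_range_of_inj hL'inj]
    simp [Module.finrank_pi]
  have hEdim : Module.finrank ℝ (EuclideanSpace ℝ (Fin N)) = N := by
    simp [finrank_euclideanSpace]
  have hpos : 0 < Module.finrank ℝ (W ⊓ U : Submodule ℝ (EuclideanSpace ℝ (Fin N))) := by
    have h1 := Submodule.finrank_sup_add_finrank_inf_eq W U
    have h2 : Module.finrank ℝ (W ⊔ U : Submodule ℝ (EuclideanSpace ℝ (Fin N))) ≤ N := (Submodule.finrank_le _).trans (le_of_eq hEdim)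
    omega
  have hnt : Nontrivial (W ⊓ U : Submodule ℝ (EuclideanSpace ℝ (Fin N))) := Module.nontrivial_of_finrank_pos hpos
  obtain ⟨⟨x, hx⟩, hxne⟩ := exists_ne (0 : (W ⊓ U : Submodule ℝ (EuclideanSpace ℝ (Fin N))))
  have hxne0 : x ≠ 0 := by
    intro h; apply hxne; ext; simp [h]
  obtain ⟨z, hz⟩ := hx.2
  obtain ⟨c, hc⟩ := Submodule.mem_span_range_iff_exists_fun ℝ |>.mp hx.1
  -- function-level identity
  have hxfun : (x : Fin N → ℝ) = ∑ i : P, c i • (f i : Fin N → ℝ) := by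
    have := congrArg (WithLp.equiv 2 (Fin N → ℝ)) hc.symm
    simpa using this
  have hxB : (x : Fin N → ℝ) = B *ᵥ z := by
    have := congrArg (WithLp.equiv 2 (Fin N → ℝ)) hz
    simpa [hL'] using this.symm
  -- orthonormality at dotProduct level
  have horth : ∀ i j : P, (f i : Fin N → ℝ) ⬝ᵥ (f j : Fin N → ℝ) = if i = j then 1 else 0 := by
    intro i j
    have := orthonormal_iff_ite.mp horthF i j
    simpa [PiLp.inner_apply, RCLike.inner_apply, dotProduct, starRingEnd_apply, mul_comm] using this
  have hMx : M *ᵥ (x : Fin N → ℝ) = ∑ i : P, (c i * hM.eigenvalues i) • (f i : Fin N → ℝ) := by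
    rw [hxfun, ← Matrix.mulVecLin_apply, map_sum]
    refine Finset.sum_congr rfl fun i _ => ?_
    rw [LinearMap.map_smul, Matrix.mulVecLin_apply, mul_smul]
    congr 1
    exact hM.mulVec_eigenvectorBasis i
  have hdot : ∀ d e : P → ℝ, (∑ i : P, d i • (f i : Fin N → ℝ)) ⬝ᵥ (∑ i : P, e i • (f i : Fin N → ℝ))
      = ∑ i : P, d i * e i := by
    intro d e
    rw [sum_dotProduct']
    refine Finset.sum_congr rfl fun i _ => ?_
    rw [smul_dotProduct, dotProduct_sum', smul_eq_mul]
    have hinner : ∑ j : P, (f i : Fin N → ℝ) ⬝ᵥ (e j • (f j : Fin N → ℝ)) = e i := by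
      rw [Finset.sum_eq_single i]
      · rw [dotProduct_smul, horth i i, if_pos rfl]; simp
      · intro j _ hji
        rw [dotProduct_smul, horth i j, if_neg (Ne.symm hji)]; simp
      · intro h; exact absurd (Finset.mem_univ i) h
    rw [hinner]
  have hq : (x : Fin N → ℝ) ⬝ᵥ (M *ᵥ (x : Fin N → ℝ)) = ∑ i : P, hM.eigenvalues i * c i ^ 2 := by
    rw [hMx, hxfun, hdot]
    exact Finset.sum_congr rfl fun i _ => by ring
  have hnorm : (x : Fin N → ℝ) ⬝ᵥ (x : Fin N → ℝ) = ∑ i : P, c i ^ 2 := by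
    rw [hxfun, hdot]
    exact Finset.sum_congr rfl fun i _ => by ring
  obtain ⟨i0, hi0⟩ : ∃ i : P, c i ≠ 0 := by
    by_contra h
    push_neg at h
    apply hxne0
    have : (x : Fin N → ℝ) = 0 := by
      rw [hxfun]; simp [h]
    exact WithLp.ofLp_injective 2 this
  have hlam : ∀ i : P, t < hM.eigenvalues i := fun i =>
    (Finset.mem_filter.mp i.2).2
  have hstrict : t * ((x : Fin N → ℝ) ⬝ᵥ (x : Fin N → ℝ)) <
      (x : Fin N → ℝ) ⬝ᵥ (M *ᵥ (x : Fin N → ℝ)) := by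
    rw [hq, hnorm, Finset.mul_sum]
    refine Finset.sum_lt_sum (fun i _ => ?_) ⟨i0, Finset.mem_univ _, ?_⟩
    · exact mul_le_mul_of_nonneg_right (hlam i).le (sq_nonneg _)
    · have hc2 : 0 < c i0 ^ 2 := by positivity
      exact mul_lt_mul_of_pos_right (hlam i0) hc2
  have := hform z
  rw [← hxB] at this
  exact absurd this (not_le.mpr hstrict)

lemma sLap_apply {V : Type*} [Fintype V] [DecidableEq V] (G : SimpleGraph V) (i j : V) :
    sLap G i j = (if i = j then (G.degree i : ℝ) else 0) + (if G.Adj i j then 1 else 0) := by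
  simp [sLap, Matrix.diagonal_apply]

lemma sLap_quadform {V : Type*} [Fintype V] [DecidableEq V] (G : SimpleGraph V)
    (x : V → ℝ) : 0 ≤ x ⬝ᵥ (sLap G *ᵥ x) := by
  classical
  set A : Matrix V V ℝ := G.adjMatrix ℝ with hA
  have hAnn : ∀ i j, 0 ≤ A i j := by
    intro i j; simp only [hA, SimpleGraph.adjMatrix_apply]; positivity
  have hAsymm : ∀ i j, A i j = A j i := by
    intro i j; simp [hA, SimpleGraph.adj_comm]
  have hdeg : ∀ i, (G.degree i : ℝ) = ∑ j, A i j := by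
    intro i
    rw [SimpleGraph.degree, SimpleGraph.neighborFinset_eq_filter]
    simp [hA, SimpleGraph.adjMatrix_apply, Finset.sum_boole]
  have h1 : x ⬝ᵥ (Matrix.diagonal (fun v => (G.degree v : ℝ)) *ᵥ x)
      = ∑ i, ∑ j, A i j * x i ^ 2 := by
    simp only [dotProduct, Matrix.mulVec_diagonal]
    refine Finset.sum_congr rfl fun i _ => ?_
    rw [hdeg i, Finset.sum_mul, Finset.mul_sum]
    exact Finset.sum_congr rfl fun j _ => by ring
  have h2 : x ⬝ᵥ (A *ᵥ x) = ∑ i, ∑ j, A i j * x i * x j := by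
    simp only [dotProduct, Matrix.mulVec]
    refine Finset.sum_congr rfl fun i _ => ?_
    rw [Finset.mul_sum]
    exact Finset.sum_congr rfl fun j _ => by ring
  have hq : x ⬝ᵥ (sLap G *ᵥ x)
      = (∑ i, ∑ j, A i j * x i ^ 2) + ∑ i, ∑ j, A i j * x i * x j := by
    simp only [sLap, Matrix.add_mulVec, dotProduct_add, ← hA]
    rw [h1, h2]
  have hswap : (∑ i, ∑ j, A i j * x i ^ 2) = ∑ i, ∑ j, A i j * x j ^ 2 := by
    rw [Finset.sum_comm]
    exact Finset.sum_congr rfl fun i _ => Finset.sum_congr rfl fun j _ => by rw [hAsymm]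
  have hexp : (∑ i, ∑ j, A i j * (x i + x j) ^ 2)
      = (∑ i, ∑ j, A i j * x i ^ 2) + (∑ i, ∑ j, A i j * x j ^ 2)
        + 2 * ∑ i, ∑ j, A i j * x i * x j := by
    calc (∑ i, ∑ j, A i j * (x i + x j) ^ 2)
        = ∑ i, ∑ j, (A i j * x i ^ 2 + A i j * x j ^ 2 + 2 * (A i j * x i * x j)) :=
          Finset.sum_congr rfl fun i _ => Finset.sum_congr rfl fun j _ => by ring
      _ = _ := by simp only [Finset.sum_add_distrib, ← Finset.mul_sum]
  have hnn : 0 ≤ ∑ i, ∑ j, A i j * (x i + x j) ^ 2 :=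
    Finset.sum_nonneg fun i _ => Finset.sum_nonneg fun j _ =>
      mul_nonneg (hAnn i j) (sq_nonneg _)
  linarith [hnn, hq, hswap, hexp]

lemma sLap_posSemidef_s19 {V : Type*} [Fintype V] [DecidableEq V] (G : SimpleGraph V) :
    (sLap G).PosSemidef := by
  refine Matrix.posSemidef_iff_dotProduct_mulVec.mpr ⟨?_, fun x => ?_⟩
  · refine Matrix.IsHermitian.add ?_ ?_
    · exact (Matrix.isHermitian_diagonal _)
    · show _ᴴ = _
      ext i j
      simp [Matrix.conjTranspose_apply]
      rw [SimpleGraph.adj_comm]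
  · simpa using sLap_quadform G x


lemma restrict_form {n : ℕ} (Q : Matrix (Fin n) (Fin n) ℝ) (w : Fin 4 → Fin n) (y : Fin 4 → ℝ) :
    (∑ k, y k • (Pi.single (w k) (1:ℝ) : Fin n → ℝ)) ⬝ᵥ (Q *ᵥ (∑ k, y k • (Pi.single (w k) (1:ℝ) : Fin n → ℝ)))
      = y ⬝ᵥ ((Q.submatrix w w) *ᵥ y) := by
  have hQx : Q *ᵥ (∑ k, y k • (Pi.single (w k) (1:ℝ) : Fin n → ℝ))
      = ∑ l, y l • (fun i => Q i (w l)) := by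
    rw [← Matrix.mulVecLin_apply, map_sum]
    refine Finset.sum_congr rfl fun l _ => ?_
    rw [LinearMap.map_smul, Matrix.mulVecLin_apply, Matrix.mulVec_single]
    simp
    rfl
  rw [hQx, sum_dotProduct']
  simp only [smul_dotProduct, smul_eq_mul]
  have hs : ∀ k : Fin 4, (Pi.single (w k) (1:ℝ) : Fin n → ℝ) ⬝ᵥ (∑ l, y l • fun i => Q i (w l))
      = ∑ l, y l * Q (w k) (w l) := by
    intro k
    rw [single_dotProduct, one_mul, Finset.sum_apply]
    exact Finset.sum_congr rfl fun l _ => by simp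
  simp only [hs]
  simp only [dotProduct, Matrix.mulVec, Matrix.submatrix_apply]
  refine Finset.sum_congr rfl fun k _ => ?_
  rw [Finset.mul_sum, Finset.mul_sum]
  exact Finset.sum_congr rfl fun l _ => by ring

lemma restrict_dot {n : ℕ} (w : Fin 4 → Fin n) (hw : Function.Injective w) (y : Fin 4 → ℝ) :
    (∑ k, y k • (Pi.single (w k) (1:ℝ) : Fin n → ℝ)) ⬝ᵥ
      (∑ k, y k • (Pi.single (w k) (1:ℝ) : Fin n → ℝ)) = y ⬝ᵥ y := by
  rw [sum_dotProduct']
  simp only [smul_dotProduct, smul_eq_mul]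
  have hs : ∀ k : Fin 4, (Pi.single (w k) (1:ℝ) : Fin n → ℝ) ⬝ᵥ
      (∑ l, y l • (Pi.single (w l) (1:ℝ) : Fin n → ℝ)) = y k := by
    intro k
    rw [single_dotProduct, one_mul, Finset.sum_apply]
    have hterm : ∀ l : Fin 4, (y l • (Pi.single (w l) (1:ℝ) : Fin n → ℝ)) (w k)
        = y l * (if w k = w l then 1 else 0) := by
      intro l; rw [Pi.smul_apply, Pi.single_apply, smul_eq_mul]
    rw [Finset.sum_congr rfl fun l _ => hterm l, Finset.sum_eq_single k]
    · simp
    · intro l _ hlk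
      rw [if_neg (fun h => hlk (hw h).symm), mul_zero]
    · intro h; exact absurd (Finset.mem_univ k) h
  simp only [hs]
  simp only [dotProduct]

theorem stmt19 {n : ℕ} (G : SimpleGraph (Fin n)) (hQ : (sLap G).IsHermitian)
    (v a b c : Fin n)
    (hv : G.degree v = G.minDegree) (hmin : 1 ≤ G.minDegree)
    (hva : ¬ G.Adj v a) (hvb : ¬ G.Adj v b) (hvc : ¬ G.Adj v c)
    (hav : a ≠ v) (hbv : b ≠ v) (hcv : c ≠ v)
    (hab : G.Adj a b) (hac : G.Adj a c) (hbc : G.Adj b c)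
    (hQH : ((sLap G).submatrix ![v, a, b, c] ![v, a, b, c]).IsHermitian) :
    3 ≤ (Finset.univ.filter fun i =>
        hQH.eigenvalues i ≤ (max (G.degree a) (max (G.degree b) (G.degree c)) : ℝ)).card ∧
    3 ≤ eigCount hQ (Set.Icc (0 : ℝ) (G.maxDegree : ℝ)) := by
  have hav' : ¬ G.Adj a v := fun h => hva h.symm
  have hbv' : ¬ G.Adj b v := fun h => hvb h.symm
  have hcv' : ¬ G.Adj c v := fun h => hvc h.symm
  have hva' : v ≠ a := hav.symm
  have hvb' : v ≠ b := hbv.symm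
  have hvc' : v ≠ c := hcv.symm
  have hab' : a ≠ b := G.ne_of_adj hab
  have hac' : a ≠ c := G.ne_of_adj hac
  have hbc' : b ≠ c := G.ne_of_adj hbc
  have hba' : b ≠ a := hab'.symm
  have hca' : c ≠ a := hac'.symm
  have hcb' : c ≠ b := hbc'.symm
  have hba : G.Adj b a := hab.symm
  have hca : G.Adj c a := hac.symm
  have hcb : G.Adj c b := hbc.symm
  set m : ℝ := ((max (G.degree a) (max (G.degree b) (G.degree c)) : ℕ) : ℝ) with hm
  have hdam : (G.degree a : ℝ) ≤ m :=
    Nat.cast_le.mpr (le_max_left _ _)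
  have hdbm : (G.degree b : ℝ) ≤ m :=
    Nat.cast_le.mpr (le_trans (le_max_left _ _) (le_max_right (G.degree a) _))
  have hdcm : (G.degree c : ℝ) ≤ m :=
    Nat.cast_le.mpr (le_trans (le_max_right _ _) (le_max_right (G.degree a) _))
  have hdvm : (G.degree v : ℝ) ≤ m := by
    refine le_trans (Nat.cast_le.mpr ?_) hdam
    exact hv ▸ G.minDegree_le_degree a
  have hQHform : ∀ y : Fin 4 → ℝ,
      y ⬝ᵥ (((sLap G).submatrix ![v, a, b, c] ![v, a, b, c]) *ᵥ y)
      = (G.degree v : ℝ) * y 0 ^ 2 + (G.degree a : ℝ) * y 1 ^ 2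
        + (G.degree b : ℝ) * y 2 ^ 2 + (G.degree c : ℝ) * y 3 ^ 2
        + 2 * (y 1 * y 2 + y 1 * y 3 + y 2 * y 3) := by
    intro y
    simp only [dotProduct, Matrix.mulVec, Fin.sum_univ_four, Matrix.submatrix_apply,
      Matrix.cons_val_zero, Matrix.cons_val_one, Matrix.head_cons, Matrix.cons_val_two,
      Matrix.tail_cons, Matrix.cons_val_three, sLap_apply]
    simp only [if_pos rfl, hva', hvb', hvc', hav, hbv, hcv, hab', hac', hbc', hba', hca', hcb',
      hva, hvb, hvc, hav', hbv', hcv', hab, hac, hbc, hba, hca, hcb, if_true, if_false,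
      ite_true, ite_false]
    simp [SimpleGraph.irrefl, Matrix.vecHead, Matrix.vecTail]
    ring_nf
    congr! 1
  have hbound : ∀ y : Fin 4 → ℝ, y 1 + y 2 + y 3 = 0 →
      y ⬝ᵥ (((sLap G).submatrix ![v, a, b, c] ![v, a, b, c]) *ᵥ y) ≤ m * (y ⬝ᵥ y) := by
    intro y hy
    rw [hQHform y]
    have hyy : y ⬝ᵥ y = y 0 ^ 2 + y 1 ^ 2 + y 2 ^ 2 + y 3 ^ 2 := by
      simp [dotProduct, Fin.sum_univ_four]; ring
    rw [hyy]
    have hy2 : (y 1 + y 2 + y 3) ^ 2 = 0 := by rw [hy]; ring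
    nlinarith [mul_nonneg (sub_nonneg.2 hdvm) (sq_nonneg (y 0)),
      mul_nonneg (sub_nonneg.2 hdam) (sq_nonneg (y 1)),
      mul_nonneg (sub_nonneg.2 hdbm) (sq_nonneg (y 2)),
      mul_nonneg (sub_nonneg.2 hdcm) (sq_nonneg (y 3)), hy2]
  constructor
  · -- Part 1
    set B4 : Matrix (Fin 4) (Fin 3) ℝ := ![![1,0,0],![0,1,0],![0,0,1],![0,-1,-1]] with hB4
    have hB4z : ∀ (z : Fin 3 → ℝ) (i : Fin 4), (B4 *ᵥ z) i = ![z 0, z 1, z 2, -(z 1 + z 2)] i := by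
      intro z i
      fin_cases i <;>
        simp [hB4, Matrix.mulVec, dotProduct, Fin.sum_univ_three] <;> ring
    have hB4inj : Function.Injective B4.mulVecLin := by
      rw [← LinearMap.ker_eq_bot, LinearMap.ker_eq_bot']
      intro z hz
      funext i
      fin_cases i
      · have := congrFun hz 0
        simpa [hB4z z 0] using this
      · have := congrFun hz 1
        simpa [hB4z z 1] using this
      · have := congrFun hz 2
        simpa [hB4z z 2] using this
    refine le_trans (key_count hQH m B4 hB4inj ?_) ?_
    · intro z
      refine hbound _ ?_
      rw [hB4z z 1, hB4z z 2, hB4z z 3]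
      simp only [Matrix.cons_val_one, Matrix.head_cons, Matrix.cons_val_two,
        Matrix.tail_cons, Matrix.cons_val_three, Matrix.cons_val_zero]
      ring
    · refine le_of_eq ?_
      have hmm : m = ((G.degree a : ℝ) ⊔ ((G.degree b : ℝ) ⊔ (G.degree c : ℝ))) := by
        rw [hm]; push_cast; rfl
      rw [hmm]
  · -- Part 2
    set Δ : ℝ := (G.maxDegree : ℝ) with hΔ
    have hmΔ : m ≤ Δ := by
      rw [hm, hΔ]
      exact_mod_cast max_le (G.degree_le_maxDegree a)
        (max_le (G.degree_le_maxDegree b) (G.degree_le_maxDegree c))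
    set w : Fin 4 → Fin n := ![v, a, b, c] with hw
    have hwinj : Function.Injective w := by
      intro i j hij
      fin_cases i <;> fin_cases j <;> revert hij <;>
        simp [hw, hva', hvb', hvc', hav, hbv, hcv, hab', hac', hbc', hba', hca', hcb']
    set Bn : Matrix (Fin n) (Fin 3) ℝ := Matrix.of (fun i =>
      if i = v then ![1,0,0] else if i = a then ![0,1,0]
      else if i = b then ![0,0,1] else if i = c then ![0,-1,-1] else 0) with hBn
    have hxy : ∀ z : Fin 3 → ℝ,
        Bn *ᵥ z = ∑ k, (![z 0, z 1, z 2, -(z 1 + z 2)]) k • (Pi.single (w k) (1:ℝ) : Fin n → ℝ) := by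
      intro z
      funext i
      have hrhs : (∑ k, (![z 0, z 1, z 2, -(z 1 + z 2)]) k • (Pi.single (w k) (1:ℝ) : Fin n → ℝ)) i
          = ∑ k, (![z 0, z 1, z 2, -(z 1 + z 2)]) k * (if i = w k then 1 else 0) := by
        rw [Finset.sum_apply]
        exact Finset.sum_congr rfl fun k _ => by
          rw [Pi.smul_apply, Pi.single_apply, smul_eq_mul]
      rw [hrhs]
      show Bn i ⬝ᵥ z = _
      by_cases h0 : i = v
      · subst h0
        simp [hBn, hw, dotProduct, Fin.sum_univ_three, Fin.sum_univ_four, hva', hvb', hvc']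
      · by_cases h1 : i = a
        · subst h1
          simp [hBn, hw, dotProduct, Fin.sum_univ_three, Fin.sum_univ_four, h0, hab', hac']
        · by_cases h2 : i = b
          · subst h2
            simp [hBn, hw, dotProduct, Fin.sum_univ_three, Fin.sum_univ_four, h0, h1, hbc']
          · by_cases h3 : i = c
            · subst h3
              simp [hBn, hw, dotProduct, Fin.sum_univ_three, Fin.sum_univ_four, h0, h1, h2]
              ring
            · simp [hBn, hw, dotProduct, Fin.sum_univ_three, Fin.sum_univ_four, h0, h1, h2, h3]
    have hBninj : Function.Injective Bn.mulVecLin := by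
      rw [← LinearMap.ker_eq_bot, LinearMap.ker_eq_bot']
      intro z hz
      have hz' : ∀ i, (Bn *ᵥ z) i = 0 := fun i => congrFun hz i
      have h0 := hz' v
      have h1 := hz' a
      have h2 := hz' b
      rw [hxy z] at h0 h1 h2
      have e0 : (∑ k, (![z 0, z 1, z 2, -(z 1 + z 2)]) k • (Pi.single (w k) (1:ℝ) : Fin n → ℝ)) v = z 0 := by
        simp [hw, Fin.sum_univ_four, Pi.single_apply, hva', hvb', hvc']
      have e1 : (∑ k, (![z 0, z 1, z 2, -(z 1 + z 2)]) k • (Pi.single (w k) (1:ℝ) : Fin n → ℝ)) a = z 1 := by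
        simp [hw, Fin.sum_univ_four, Pi.single_apply, hav, hab', hac']
      have e2 : (∑ k, (![z 0, z 1, z 2, -(z 1 + z 2)]) k • (Pi.single (w k) (1:ℝ) : Fin n → ℝ)) b = z 2 := by
        simp [hw, Fin.sum_univ_four, Pi.single_apply, hbv, hba', hbc']
      funext i
      fin_cases i
      · simpa using e0 ▸ h0
      · simpa using e1 ▸ h1
      · simpa using e2 ▸ h2
    have hformn : ∀ z : Fin 3 → ℝ,
        (Bn *ᵥ z) ⬝ᵥ (sLap G *ᵥ (Bn *ᵥ z)) ≤ Δ * ((Bn *ᵥ z) ⬝ᵥ (Bn *ᵥ z)) := by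
      intro z
      set y : Fin 4 → ℝ := ![z 0, z 1, z 2, -(z 1 + z 2)] with hy
      rw [hxy z, ← hy, restrict_form (sLap G) w y, restrict_dot w hwinj y]
      have hy0 : y 1 + y 2 + y 3 = 0 := by
        simp [hy]
        try ring
      have hb := hbound y hy0
      have hyy : (0:ℝ) ≤ y ⬝ᵥ y := by
        simp only [dotProduct]
        exact Finset.sum_nonneg fun i _ => mul_self_nonneg _
      exact le_trans hb (mul_le_mul_of_nonneg_right hmΔ hyy)
    have key2 := key_count hQ Δ Bn hBninj hformn
    unfold eigCount
    refine le_trans key2 (Finset.card_le_card ?_)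
    intro i hi
    simp only [Finset.mem_filter] at hi ⊢
    exact ⟨hi.1, Set.mem_Icc.mpr ⟨(sLap_posSemidef_s19 G).eigenvalues_nonneg i, hi.2⟩⟩
end
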